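/- (Optimality of Bourgain's bound, due to Linial, London and Rabinovich and invoked by the paper.) There exists a constant c > 0 such that for every natural number N there exist n ≥ N and a finite metric space (X, d) with n points such that every embedding of X into any Euclidean space ℝ^q (any q) has distortion at least c · log n; i.e., for every q, every map f : X → ℝ^q, and every r > 0 and α ≥ 1 satisfying r·d(x, y) ≤ dist(f(x), f(y)) ≤ α·r·d(x, y) for all x, y ∈ X, one has α ≥ c · log n. -/

import Mathlib

/-!
The space is a quotient `X = 𝔽₂ᵏ / C` of the Hamming cube by a linear code `C` with
`|C| ≤ 2^(k/2)` whose dual code has minimum weight at least `K`, where `k = 16 K`; such a code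
exists by a counting (Gilbert–Varshamov) argument, and then `log |X| = Θ(K)`.

A map on the cube that is invariant under `C` has its Walsh spectrum in the dual code `C^⊥`,
so every nonzero frequency has weight at least `K`. This gives a Poincaré inequality: the sum of
`‖h y - h x‖²` over all pairs is at most `2^k / (2K)` times the sum over the edges of the cube.
For an embedding `f` of `X` with `r · d ≤ ‖f x - f y‖ ≤ α r · d`, edges have length at most
`α r`, while, since Hamming balls of radius `K` around `C` cover at most half of the cube, at
least half of all pairs are at distance `≥ K` and contribute at least `(r K)²`. Comparing gives
`K³ ≤ k α² = 16 K α²`, i.e. `α ≥ K / 4 ≥ log |X| / (64 log 2)`.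
-/

open Finset Matrix

abbrev Cube (k : ℕ) := Fin k → ZMod 2

variable {k : ℕ}

lemma zmod_two_eq_one_of_ne_zero {v : ZMod 2} (hv : v ≠ 0) : v = 1 := by
  revert v; decide

lemma cube_add_eq_zero_iff {x y : Cube k} : x + y = 0 ↔ x = y := by
  rw [add_eq_zero_iff_eq_neg, ZModModule.neg_eq_self]

lemma hammingNorm_single_one_le (i : Fin k) : hammingNorm (Pi.single i 1 : Cube k) ≤ 1 :=
  card_le_one.mpr fun a ha b hb => by
    simp only [mem_filter, Pi.single_apply] at ha hb
    split_ifs at ha hb with h1 h2 <;> simp_all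

lemma sum_sum_eq_sum_sum_add {G M : Type*} [AddGroup G] [Fintype G] [AddCommMonoid M]
    (F : G → G → M) : ∑ x, ∑ y, F x y = ∑ c, ∑ x, F x (x + c) := by
  conv_rhs => rw [sum_comm]
  exact sum_congr rfl fun x _ => (Equiv.sum_comp (Equiv.addLeft x) (F x)).symm

def walsh (a x : Cube k) : ℝ := if a ⬝ᵥ x = 0 then 1 else -1

lemma walsh_comm (a x : Cube k) : walsh a x = walsh x a := by
  rw [walsh, walsh, dotProduct_comm]

lemma walsh_add_right (a x y : Cube k) : walsh a (x + y) = walsh a x * walsh a y := by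
  have hzero : ∀ u v : ZMod 2, u + v = 0 ↔ (u = 0 ↔ v = 0) := by decide
  unfold walsh
  rw [dotProduct_add]
  split_ifs <;> simp_all

lemma walsh_zero_left (x : Cube k) : walsh 0 x = 1 := by simp [walsh]

lemma walsh_mul_self (a x : Cube k) : walsh a x * walsh a x = 1 := by
  unfold walsh; split_ifs <;> norm_num

lemma walsh_single_right (a : Cube k) (i : Fin k) :
    walsh a (Pi.single i 1) = if a i = 0 then 1 else -1 := by
  simp [walsh, dotProduct_single]

lemma sum_walsh_left (z : Cube k) : ∑ a, walsh a z = if z = 0 then 2 ^ k else 0 := by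
  split_ifs with hz
  · simp [hz, walsh_comm _ (0 : Cube k), walsh_zero_left]
  · obtain ⟨i, hi⟩ := Function.ne_iff.mp hz
    have hflip : ∑ a : Cube k, walsh (a + Pi.single i 1) z = -∑ a, walsh a z := by
      simp only [walsh_comm _ z, walsh_add_right, walsh_single_right, zmod_two_eq_one_of_ne_zero hi]
      simp
    have hshift := Equiv.sum_comp (Equiv.addRight (Pi.single i 1 : Cube k)) (walsh · z)
    simp only [Equiv.coe_addRight] at hshift
    linarith

variable {E : Type*} [NormedAddCommGroup E] [InnerProductSpace ℝ E]

def walshTransform (h : Cube k → E) (a : Cube k) : E := ∑ x, walsh a x • h x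

open RealInnerProductSpace in
lemma sum_norm_sq_walshTransform (h : Cube k → E) :
    ∑ a, ‖walshTransform h a‖ ^ 2 = 2 ^ k * ∑ x, ‖h x‖ ^ 2 := by
  have hexpand (a : Cube k) :
      ‖walshTransform h a‖ ^ 2 = ∑ x, ∑ y, walsh a (x + y) * ⟪h x, h y⟫ := by
    rw [← real_inner_self_eq_norm_sq, walshTransform, sum_inner]
    simp_rw [inner_sum, real_inner_smul_left, real_inner_smul_right, walsh_add_right, mul_assoc]
  calc ∑ a, ‖walshTransform h a‖ ^ 2
      = ∑ x, ∑ y, (∑ a, walsh a (x + y)) * ⟪h x, h y⟫ := by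
        simp_rw [hexpand, sum_mul]
        rw [sum_comm]
        exact sum_congr rfl fun _ _ => sum_comm
    _ = ∑ x, 2 ^ k * ‖h x‖ ^ 2 := by
        simp_rw [sum_walsh_left, cube_add_eq_zero_iff, ite_mul, zero_mul, sum_ite_eq,
          mem_univ, if_true, real_inner_self_eq_norm_sq]
    _ = 2 ^ k * ∑ x, ‖h x‖ ^ 2 := (mul_sum ..).symm

lemma walshTransform_comp_add_right (h : Cube k → E) (c a : Cube k) :
    walshTransform (fun x => h (x + c)) a = walsh a c • walshTransform h a := by
  rw [walshTransform, walshTransform, smul_sum,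
    ← Equiv.sum_comp (Equiv.addRight c) (fun x => walsh a x • h (x + c))]
  refine sum_congr rfl fun x _ => ?_
  simp only [Equiv.coe_addRight, add_assoc, ZModModule.add_self, add_zero, smul_smul]
  rw [walsh_add_right, mul_comm]

lemma walshTransform_eq_zero_of_invariant {h : Cube k → E} {c : Cube k}
    (hc : ∀ x, h (x + c) = h x) {a : Cube k} (ha : a ⬝ᵥ c ≠ 0) :
    walshTransform h a = 0 := by
  have hfix := walshTransform_comp_add_right h c a
  simp only [hc, walsh, ha, if_false, neg_one_smul] at hfix
  rw [eq_neg_iff_add_eq_zero, ← two_smul ℝ] at hfix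
  exact (smul_eq_zero.mp hfix).resolve_left two_ne_zero

lemma two_pow_mul_sum_norm_sub_sq (h : Cube k → E) (c : Cube k) :
    2 ^ k * ∑ x, ‖h (x + c) - h x‖ ^ 2
      = ∑ a, (walsh a c - 1) ^ 2 * ‖walshTransform h a‖ ^ 2 := by
  have htransform (a : Cube k) : walshTransform (fun x => h (x + c) - h x) a
      = (walsh a c - 1) • walshTransform h a := by
    rw [sub_smul, one_smul, ← walshTransform_comp_add_right, walshTransform, walshTransform,
      walshTransform, ← sum_sub_distrib]
    simp_rw [smul_sub]
  rw [← sum_norm_sq_walshTransform]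
  simp_rw [htransform, norm_smul, mul_pow, Real.norm_eq_abs, sq_abs]

lemma sum_walsh_sub_one_sq (a : Cube k) :
    ∑ c, (walsh a c - 1) ^ 2 = if a = 0 then 0 else 2 ^ (k + 1) := by
  have hsq (c : Cube k) : (walsh a c - 1) ^ 2 = 2 - 2 * walsh c a := by
    rw [walsh_comm c a]; linear_combination walsh_mul_self a c
  simp_rw [hsq, sum_sub_distrib, ← mul_sum, sum_walsh_left]
  split_ifs <;> simp [pow_succ]; ring

lemma sum_walsh_single_sub_one_sq (a : Cube k) :
    ∑ i, (walsh a (Pi.single i 1) - 1) ^ 2 = 4 * (hammingNorm a : ℝ) := by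
  simp_rw [walsh_single_right]
  simp [hammingNorm, apply_ite (fun t : ℝ => (t - 1) ^ 2), sum_ite, mul_comm]
  norm_num

lemma two_pow_mul_sum_sum_norm_sub_sq {ι : Type*} [Fintype ι] (h : Cube k → E)
    (v : ι → Cube k) :
    2 ^ k * ∑ i, ∑ x, ‖h (x + v i) - h x‖ ^ 2
      = ∑ a, (∑ i, (walsh a (v i) - 1) ^ 2) * ‖walshTransform h a‖ ^ 2 := by
  rw [mul_sum]
  simp_rw [two_pow_mul_sum_norm_sub_sq, sum_mul]
  exact sum_comm

theorem poincare_of_dual_hammingNorm_ge {C : AddSubgroup (Cube k)} {m : ℕ}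
    (hdual : ∀ a ≠ 0, (∀ c ∈ C, a ⬝ᵥ c = 0) → m ≤ hammingNorm a)
    {h : Cube k → E} (hinv : ∀ x, ∀ c ∈ C, h (x + c) = h x) :
    2 * m * ∑ x, ∑ y, ‖h y - h x‖ ^ 2
      ≤ 2 ^ k * ∑ i, ∑ x, ‖h (x + Pi.single i 1) - h x‖ ^ 2 := by
  set T := walshTransform h
  have hcoeff (a : Cube k) : 2 * m * ((∑ c, (walsh a c - 1) ^ 2) * ‖T a‖ ^ 2)
      ≤ 2 ^ k * ((∑ i, (walsh a (Pi.single i 1) - 1) ^ 2) * ‖T a‖ ^ 2) := by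
    rw [sum_walsh_sub_one_sq, sum_walsh_single_sub_one_sq]
    split_ifs with ha
    · simp only [zero_mul, mul_zero]; positivity
    by_cases hperp : ∀ c ∈ C, a ⬝ᵥ c = 0
    · have hm : (m : ℝ) ≤ hammingNorm a := by exact_mod_cast hdual a ha hperp
      have hT : 0 ≤ 2 ^ k * ‖T a‖ ^ 2 := by positivity
      rw [pow_succ]
      nlinarith [mul_le_mul_of_nonneg_right hm hT]
    · push Not at hperp
      obtain ⟨c, hc, hac⟩ := hperp
      simp [T, walshTransform_eq_zero_of_invariant (fun x => hinv x c hc) hac]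
  refine le_of_mul_le_mul_left ?_ (pow_pos (two_pos (α := ℝ)) k)
  calc 2 ^ k * (2 * m * ∑ x, ∑ y, ‖h y - h x‖ ^ 2)
      = 2 * m * (2 ^ k * ∑ c, ∑ x, ‖h (x + c) - h x‖ ^ 2) := by
        rw [sum_sum_eq_sum_sum_add fun x y => ‖h y - h x‖ ^ 2]; ring
    _ = ∑ a, 2 * m * ((∑ c, (walsh a c - 1) ^ 2) * ‖T a‖ ^ 2) := by
        rw [two_pow_mul_sum_sum_norm_sub_sq h (fun c => c), mul_sum]
    _ ≤ ∑ a, 2 ^ k * ((∑ i, (walsh a (Pi.single i 1) - 1) ^ 2) * ‖T a‖ ^ 2) :=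
        sum_le_sum fun a _ => hcoeff a
    _ = 2 ^ k * (2 ^ k * ∑ i, ∑ x, ‖h (x + Pi.single i 1) - h x‖ ^ 2) := by
        rw [two_pow_mul_sum_sum_norm_sub_sq h (fun i => Pi.single i 1), mul_sum]

lemma two_mul_card_dotProduct_eq_zero {a : Cube k} (ha : a ≠ 0) :
    2 * #{w : Cube k | a ⬝ᵥ w = 0} = 2 ^ k := by
  have hind (w : Cube k) : 1 + walsh w a = if a ⬝ᵥ w = 0 then 2 else 0 := by
    rw [walsh, dotProduct_comm]; split_ifs <;> norm_num
  have hsum : ∑ w : Cube k, (1 + walsh w a) = 2 ^ k := by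
    simp [sum_add_distrib, sum_walsh_left, ha, card_univ]
  simp only [hind, sum_ite, sum_const, nsmul_eq_mul] at hsum
  exact_mod_cast (by linarith : (2 : ℝ) * #{w : Cube k | a ⬝ᵥ w = 0} = 2 ^ k)

theorem exists_addSubgroup_dual_hammingNorm_ge {t m : ℕ}
    (hball : #{w : Cube k | hammingNorm w < m} < 2 ^ t) :
    ∃ C : AddSubgroup (Cube k), Nat.card C ≤ 2 ^ t ∧
      ∀ a ≠ 0, (∀ c ∈ C, a ⬝ᵥ c = 0) → m ≤ hammingNorm a := by
  let light : Finset (Cube k) := {a | a ≠ 0 ∧ hammingNorm a < m}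
  let bad := light.biUnion fun a => Fintype.piFinset fun _ : Fin t => {w : Cube k | a ⬝ᵥ w = 0}
  have hlight : #light < 2 ^ t :=
    (card_le_card (monotone_filter_right _ fun _ _ ha => ha.2)).trans_lt hball
  have hbad : 2 ^ t * #bad ≤ #light * 2 ^ (k * t) :=
    calc 2 ^ t * #bad ≤ ∑ a ∈ light, 2 ^ t * #{w : Cube k | a ⬝ᵥ w = 0} ^ t := by
          rw [← mul_sum]; gcongr; exact card_biUnion_le.trans_eq (by simp)
      _ = ∑ a ∈ light, 2 ^ (k * t) := sum_congr rfl fun a ha => by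
          rw [← mul_pow, two_mul_card_dotProduct_eq_zero (mem_filter.mp ha).2.1, pow_mul]
      _ = #light * 2 ^ (k * t) := by rw [sum_const, smul_eq_mul]
  obtain ⟨H, -, hH⟩ : ∃ H ∈ (univ : Finset (Fin t → Cube k)), H ∉ bad := by
    refine exists_mem_notMem_of_card_lt_card ?_
    simp only [card_univ, Fintype.card_fun, Fintype.card_fin, ZMod.card, ← pow_mul]
    nlinarith [pow_pos (two_pos (α := ℕ)) (k * t)]
  let φ := (Fintype.linearCombination (ZMod 2) H).toAddMonoidHom
  refine ⟨φ.range, ?_, fun a ha hperp => ?_⟩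
  · calc Nat.card φ.range ≤ Nat.card (Fin t → ZMod 2) :=
          Nat.card_le_card_of_surjective _ φ.rangeRestrict_surjective
      _ = 2 ^ t := by simp
  · by_contra hlt
    refine hH (mem_biUnion.mpr ⟨a, by simp [light, ha, not_le.mp hlt], ?_⟩)
    refine Fintype.mem_piFinset.mpr fun j => mem_filter.mpr ⟨mem_univ _, hperp _ ?_⟩
    exact ⟨Pi.single j 1, by simp [φ, Fintype.linearCombination_apply_single]⟩

lemma card_hammingNorm_lt_le (m : ℕ) :
    #{w : Cube k | hammingNorm w < m} ≤ ∑ j ∈ range m, k.choose j := by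
  have hsub : ({w | hammingNorm w < m} : Finset (Cube k)) ⊆
      ((range m).biUnion fun j => powersetCard j univ).image
        fun s i => if i ∈ s then 1 else 0 := by
    intro w hw
    refine mem_image.mpr ⟨({i | w i ≠ 0} : Finset (Fin k)), mem_biUnion.mpr
      ⟨_, mem_range.mpr (mem_filter.mp hw).2, mem_powersetCard_univ.mpr rfl⟩, ?_⟩
    funext i
    by_cases hi : w i = 0 <;> simp [hi, zmod_two_eq_one_of_ne_zero]
  calc _ ≤ _ := card_le_card hsub
    _ ≤ _ := card_image_le
    _ ≤ ∑ j ∈ range m, #(powersetCard j (univ : Finset (Fin k))) := card_biUnion_le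
    _ = _ := by simp [card_powersetCard]

open Nat in
lemma two_mul_sum_choose_le (K : ℕ) :
    2 * ∑ j ∈ range K, (16 * K).choose j ≤ 2 ^ (8 * K) := by
  have hterm {j : ℕ} (hj : j < K) :
      2 * ((16 * K).choose j : ℝ) ≤ 16 ^ K * ((K : ℝ) ^ j / j !) := by
    have h16 : 2 * (16 : ℝ) ^ j ≤ 16 ^ K := by
      calc 2 * (16 : ℝ) ^ j ≤ 16 ^ (j + 1) := by
            rw [pow_succ]; linarith [pow_pos (by norm_num : (0 : ℝ) < 16) j]
        _ ≤ 16 ^ K := pow_le_pow_right₀ (by norm_num) hj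
    calc 2 * ((16 * K).choose j : ℝ) ≤ 2 * (((16 * K : ℕ) : ℝ) ^ j / j !) := by
          gcongr; exact choose_le_pow_div j (16 * K)
      _ = 2 * 16 ^ j * ((K : ℝ) ^ j / j !) := by push_cast; ring
      _ ≤ 16 ^ K * ((K : ℝ) ^ j / j !) := by gcongr
  have hreal : 2 * ∑ j ∈ range K, ((16 * K).choose j : ℝ) ≤ 256 ^ K :=
    calc 2 * ∑ j ∈ range K, ((16 * K).choose j : ℝ)
        ≤ ∑ j ∈ range K, 16 ^ K * ((K : ℝ) ^ j / j !) := by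
          rw [mul_sum]; exact sum_le_sum fun j hj => hterm (mem_range.mp hj)
      _ ≤ 16 ^ K * Real.exp K := by
          rw [← mul_sum]; gcongr; exact Real.sum_le_exp_of_nonneg (by positivity) K
      _ ≤ 16 ^ K * 16 ^ K := by
          rw [← Real.exp_one_pow]; gcongr; linarith [Real.exp_one_lt_d9]
      _ = 256 ^ K := by rw [← mul_pow]; norm_num
  rw [pow_mul]
  exact_mod_cast hreal

abbrev HammingCube (k : ℕ) := Hamming fun _ : Fin k => ZMod 2

def cubeToHamming : Cube k ≃+ HammingCube k := AddEquiv.mk' Hamming.toHamming fun _ _ => rfl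

/-- The quotient norm makes the distance of two cosets the least Hamming weight in their
difference. -/
abbrev CodeQuotient (C : AddSubgroup (Cube k)) :=
  HammingCube k ⧸ C.map cubeToHamming.toAddMonoidHom

def codeProj (C : AddSubgroup (Cube k)) : Cube k →+ CodeQuotient C :=
  (QuotientAddGroup.mk' _).comp cubeToHamming.toAddMonoidHom

section CodeQuotient

variable (C : AddSubgroup (Cube k))

lemma codeProj_eq_zero_iff {x : Cube k} : codeProj C x = 0 ↔ x ∈ C := by
  rw [codeProj, AddMonoidHom.comp_apply, QuotientAddGroup.mk'_apply, QuotientAddGroup.eq_zero_iff,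
    AddEquiv.coe_toAddMonoidHom, AddSubgroup.mem_map_equiv, AddEquiv.symm_apply_apply]

lemma norm_codeProj_le (x : Cube k) : ‖codeProj C x‖ ≤ hammingNorm x :=
  QuotientAddGroup.norm_mk_le_norm.trans_eq (Hamming.norm_eq_hammingNorm _)

lemma card_norm_codeProj_lt_le (m : ℕ) :
    #{x | ‖codeProj C x‖ < m} ≤ #{w : Cube k | hammingNorm w < m} * Nat.card C := by
  classical
  have hsub : ({x | ‖codeProj C x‖ < m} : Finset (Cube k)) ⊆
      (({w | hammingNorm w < m} : Finset (Cube k)) ×ˢ ({c | c ∈ C} : Finset (Cube k))).image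
        fun p => p.1 + p.2 := by
    intro x hx
    obtain ⟨y, hy, hy_norm⟩ := QuotientAddGroup.norm_lt_iff.mp (mem_filter.mp hx).2
    set w := cubeToHamming.symm y
    have hw : codeProj C w = codeProj C x := hy
    refine mem_image.mpr ⟨(w, x - w), ?_, add_sub_cancel _ _⟩
    simp only [mem_product, mem_filter, mem_univ, true_and]
    exact ⟨by exact_mod_cast (Hamming.norm_eq_hammingNorm y).symm.trans_lt hy_norm,
      (codeProj_eq_zero_iff C).mp (by rw [map_sub, hw, sub_self])⟩
  calc _ ≤ _ := card_le_card hsub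
    _ ≤ _ := card_image_le
    _ = _ := by rw [card_product, Nat.card_eq_fintype_card, Fintype.card_subtype]

lemma card_codeQuotient_mul_card : Nat.card (CodeQuotient C) * Nat.card C = 2 ^ k := by
  rw [← AddSubgroup.card_map_of_injective (f := cubeToHamming.toAddMonoidHom)
      cubeToHamming.injective, ← AddSubgroup.card_eq_card_quotient_mul_card_addSubgroup,
    ← Nat.card_congr cubeToHamming.toEquiv]
  simp

lemma dist_codeProj_add_single_le_one (x : Cube k) (i : Fin k) :
    dist (codeProj C (x + Pi.single i 1)) (codeProj C x) ≤ 1 := by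
  rw [dist_eq_norm, ← map_sub, add_sub_cancel_left]
  exact (norm_codeProj_le C _).trans (by exact_mod_cast hammingNorm_single_one_le i)

lemma two_pow_le_two_mul_card_dist_ge {m : ℕ}
    (hnear : 2 * #{x | ‖codeProj C x‖ < m} ≤ 2 ^ k) (x : Cube k) :
    2 ^ k ≤ 2 * #{y | (m : ℝ) ≤ dist (codeProj C y) (codeProj C x)} := by
  have hcard : #{y | dist (codeProj C y) (codeProj C x) < m} = #{z | ‖codeProj C z‖ < m} :=
    card_equiv (Equiv.subRight x) fun y => by simp [dist_eq_norm]
  have hsplit := card_filter_add_card_filter_not (s := univ)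
    fun y : Cube k => dist (codeProj C y) (codeProj C x) < m
  simp only [not_lt, hcard, card_univ, Fintype.card_fun, ZMod.card, Fintype.card_fin] at hsplit
  omega

end CodeQuotient

theorem cube_le_mul_sq_of_distortion {C : AddSubgroup (Cube k)} {m : ℕ}
    (hdual : ∀ a ≠ 0, (∀ c ∈ C, a ⬝ᵥ c = 0) → m ≤ hammingNorm a)
    (hnear : 2 * #{x | ‖codeProj C x‖ < m} ≤ 2 ^ k)
    (f : CodeQuotient C → E) {r α : ℝ} (hr : 0 < r)
    (hlow : ∀ x y, r * dist x y ≤ dist (f x) (f y))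
    (hup : ∀ x y, dist (f x) (f y) ≤ α * r * dist x y) :
    (m : ℝ) ^ 3 ≤ k * α ^ 2 := by
  have hinv (x c : Cube k) (hc : c ∈ C) : f (codeProj C (x + c)) = f (codeProj C x) := by
    rw [map_add, (codeProj_eq_zero_iff C).mpr hc, add_zero]
  have hedge (i : Fin k) (x : Cube k) :
      ‖f (codeProj C (x + Pi.single i 1)) - f (codeProj C x)‖ ^ 2 ≤ (α * r) ^ 2 := by
    have hd := dist_codeProj_add_single_le_one C x i
    rw [← dist_eq_norm]
    calc _ ≤ (α * r * dist (codeProj C (x + Pi.single i 1)) (codeProj C x)) ^ 2 :=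
          pow_le_pow_left₀ dist_nonneg (hup _ _) 2
      _ = (α * r) ^ 2 * dist (codeProj C (x + Pi.single i 1)) (codeProj C x) ^ 2 := by ring
      _ ≤ (α * r) ^ 2 := mul_le_of_le_one_right (sq_nonneg _) (pow_le_one₀ dist_nonneg hd)
  have hrow (x : Cube k) :
      2 ^ k * (r * m) ^ 2 ≤ 2 * ∑ y, ‖f (codeProj C y) - f (codeProj C x)‖ ^ 2 := by
    set far := ({y | (m : ℝ) ≤ dist (codeProj C y) (codeProj C x)} : Finset (Cube k))
    have hfar : (2 : ℝ) ^ k ≤ 2 * #far := by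
      exact_mod_cast two_pow_le_two_mul_card_dist_ge C hnear x
    calc 2 ^ k * (r * m) ^ 2 ≤ 2 * ∑ _y ∈ far, (r * m) ^ 2 := by
          rw [sum_const, nsmul_eq_mul, ← mul_assoc]; gcongr
      _ ≤ 2 * ∑ y ∈ far, ‖f (codeProj C y) - f (codeProj C x)‖ ^ 2 := by
          gcongr with y hy
          rw [← dist_eq_norm]
          exact (mul_le_mul_of_nonneg_left (mem_filter.mp hy).2 hr.le).trans (hlow _ _)
      _ ≤ 2 * ∑ y, ‖f (codeProj C y) - f (codeProj C x)‖ ^ 2 := by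
          gcongr 2 * ?_
          exact sum_le_sum_of_subset_of_nonneg (subset_univ _) fun _ _ _ => sq_nonneg _
  refine le_of_mul_le_mul_left ?_ (by positivity : (0 : ℝ) < (2 ^ k) ^ 2 * r ^ 2)
  calc (2 ^ k) ^ 2 * r ^ 2 * (m : ℝ) ^ 3 = m * ∑ _x : Cube k, 2 ^ k * (r * m) ^ 2 := by
        simp [card_univ]; ring
    _ ≤ m * ∑ x, 2 * ∑ y, ‖f (codeProj C y) - f (codeProj C x)‖ ^ 2 :=
        mul_le_mul_of_nonneg_left (sum_le_sum fun x _ => hrow x) m.cast_nonneg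
    _ = 2 * m * ∑ x, ∑ y, ‖f (codeProj C y) - f (codeProj C x)‖ ^ 2 := by
        rw [← mul_sum]; ring
    _ ≤ 2 ^ k * ∑ i, ∑ x, ‖f (codeProj C (x + Pi.single i 1)) - f (codeProj C x)‖ ^ 2 :=
        poincare_of_dual_hammingNorm_ge (h := fun x => f (codeProj C x)) hdual hinv
    _ ≤ 2 ^ k * ∑ _i : Fin k, ∑ _x : Cube k, (α * r) ^ 2 :=
        mul_le_mul_of_nonneg_left (sum_le_sum fun i _ => sum_le_sum fun x _ => hedge i x)
          (by positivity)
    _ = (2 ^ k) ^ 2 * r ^ 2 * (k * α ^ 2) := by simp [card_univ]; ring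

theorem exists_codeQuotient_distortion_ge (K : ℕ) :
    ∃ C : AddSubgroup (Cube (16 * K)),
      2 ^ (8 * K) ≤ Nat.card (CodeQuotient C) ∧ Nat.card (CodeQuotient C) ≤ 2 ^ (16 * K) ∧
      ∀ {E : Type*} [NormedAddCommGroup E] [InnerProductSpace ℝ E]
        (f : CodeQuotient C → E) {r α : ℝ}, 0 < r → 0 ≤ α →
        (∀ x y, r * dist x y ≤ dist (f x) (f y)) →
        (∀ x y, dist (f x) (f y) ≤ α * r * dist x y) → (K : ℝ) ≤ 4 * α := by
  have hball : 2 * #{w : Cube (16 * K) | hammingNorm w < K} ≤ 2 ^ (8 * K) :=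
    (Nat.mul_le_mul_left 2 (card_hammingNorm_lt_le K)).trans (two_mul_sum_choose_le K)
  have hpow : 2 ^ (8 * K) * 2 ^ (8 * K) = 2 ^ (16 * K) := by rw [← pow_add]; ring_nf
  obtain ⟨C, hC, hdual⟩ :=
    exists_addSubgroup_dual_hammingNorm_ge (k := 16 * K) (t := 8 * K) (m := K)
    (by have := Nat.one_le_two_pow (n := 8 * K); omega)
  have hquot := card_codeQuotient_mul_card C
  have hC_pos : 0 < Nat.card C := Nat.card_pos
  refine ⟨C, ?_, ?_, fun f r α hr hα hlow hup => ?_⟩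
  · refine Nat.le_of_mul_le_mul_right ?_ (by positivity : 0 < 2 ^ (8 * K))
    rw [hpow, ← hquot]
    exact Nat.mul_le_mul_left _ hC
  · rw [← hquot]
    exact Nat.le_mul_of_pos_right _ hC_pos
  · have hnear : 2 * #{x | ‖codeProj C x‖ < K} ≤ 2 ^ (16 * K) :=
      calc 2 * #{x | ‖codeProj C x‖ < K}
          ≤ 2 * #{w : Cube (16 * K) | hammingNorm w < K} * Nat.card C := by
            rw [mul_assoc]; exact Nat.mul_le_mul_left 2 (card_norm_codeProj_lt_le C K)
        _ ≤ 2 ^ (8 * K) * 2 ^ (8 * K) := Nat.mul_le_mul hball hC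
        _ = 2 ^ (16 * K) := hpow
    have hcube := cube_le_mul_sq_of_distortion hdual hnear f hr hlow hup
    push_cast at hcube
    by_contra! hlt
    have hsq : 16 * α ^ 2 < (K : ℝ) ^ 2 := by nlinarith
    nlinarith [mul_lt_mul_of_pos_left hsq (hα.trans_lt (by linarith) : (0 : ℝ) < K)]

/-- **Optimality of Bourgain's bound** (Linial–London–Rabinovich).
There is a constant `c > 0` and arbitrarily large `n`-point metric spaces
such that every embedding into a Euclidean space `ℝ^q` (for any `q`) has
distortion at least `c · log n`. -/
theorem bourgain_optimal :
    ∃ c > (0 : ℝ), ∀ N : ℕ, ∃ n : ℕ, N ≤ n ∧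
      ∃ (X : Type) (_ : MetricSpace X) (_ : Fintype X),
        Fintype.card X = n ∧
        ∀ (q : ℕ) (f : X → EuclideanSpace ℝ (Fin q)) (r α : ℝ),
          0 < r → 1 ≤ α →
          (∀ x y : X,
            r * dist x y ≤ dist (f x) (f y) ∧
            dist (f x) (f y) ≤ α * r * dist x y) →
          c * Real.log n ≤ α := by
  refine ⟨1 / (64 * Real.log 2), by positivity, fun N => ?_⟩
  obtain ⟨C, hcard_ge, hcard_le, hdistortion⟩ := exists_codeQuotient_distortion_ge N
  let : Fintype (CodeQuotient C) := Fintype.ofFinite _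
  have hcard_pos : (0 : ℝ) < Fintype.card (CodeQuotient C) := by
    rw [Fintype.card_eq_nat_card]; exact_mod_cast (Nat.two_pow_pos _).trans_le hcard_ge
  refine ⟨Fintype.card (CodeQuotient C), ?_, CodeQuotient C, inferInstance, inferInstance, rfl,
    ?_⟩
  · rw [Fintype.card_eq_nat_card]
    calc N ≤ 2 ^ (8 * N) := N.lt_two_pow_self.le.trans (Nat.pow_le_pow_right two_pos (by omega))
      _ ≤ _ := hcard_ge
  · intro q f r α hr hα hf
    have hN : (N : ℝ) ≤ 4 * α :=
      hdistortion f hr (by linarith) (fun x y => (hf x y).1) (fun x y => (hf x y).2)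
    have hlog : Real.log (Fintype.card (CodeQuotient C)) ≤ 16 * N * Real.log 2 := by
      calc _ ≤ Real.log (2 ^ (16 * N)) := by
            refine Real.log_le_log hcard_pos ?_
            rw [Fintype.card_eq_nat_card]; exact_mod_cast hcard_le
        _ = 16 * N * Real.log 2 := by rw [Real.log_pow]; push_cast; ring
    rw [div_mul_eq_mul_div, one_mul, div_le_iff₀ (by positivity)]
    nlinarith [Real.log_pos one_lt_two]
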